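/- Let N ≥ 1 be an integer and P ≥ 1 squarefree, and let W_P(N) = {n : 1 ≤ n ≤ P, gcd((N−n)(N+n), P) = 1}. For any assignment of real numbers f_p to each prime p ∣ P, one has ∑_{n ∈ W_P(N)} ∏_{p ∣ P/gcd(P,n)} (f_p − 1)/(p − 1) = ∏_{p ∣ gcd(N,P)} (f_p − 1) · ∏_{p ∣ P, p ∤ 6N} (f_p − 2(f_p − 1)/(p − 1)). -/

import Mathlib

/-!
For squarefree `P`, the summand at `n`, with the condition `gcd((N - n)(N + n), P) = 1` read as an
indicator, is a product over `p ∣ P` of a function of `n mod p`: it vanishes when `n ≡ ±N`, is `1`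
when `p ∣ n`, and is `(f p - 1) / (p - 1)` otherwise. By the Chinese remainder theorem, summing
such a product over a complete residue system mod `P` gives the product of the local sums over
`ZMod p`. Each local sum is found by hand: `f p - 1` if `p ∣ N`; `1` if `p = 2 ∤ N`; and
`1 + (p - 3) (f p - 1) / (p - 1) = f p - 2 (f p - 1) / (p - 1)` if `p` is odd and `p ∤ N`
(which equals `1` for `p = 3`).
-/

open Finset Function

namespace ZMod

variable {M : Type*} [AddCommMonoid M] {m : ℕ} [NeZero m]

theorem sum_range_natCast (φ : ZMod m → M) : ∑ a ∈ range m, φ a = ∑ x, φ x :=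
  sum_nbij' (fun a => (a : ZMod m)) val (fun _ _ => mem_univ _)
    (fun x _ => mem_range.2 x.val_lt) (fun _ ha => val_cast_of_lt (mem_range.1 ha))
    (fun x _ => natCast_zmod_val x) (fun _ _ => rfl)

theorem sum_Icc_natCast (φ : ZMod m → M) : ∑ n ∈ Icc 1 m, φ n = ∑ x, φ x := by
  rw [← Ico_add_one_right_eq_Icc, sum_Ico_eq_sum_range, Nat.add_sub_cancel]
  simpa only [comp_apply, Nat.cast_add, Nat.cast_one] using
    (sum_range_natCast (φ ∘ (1 + ·))).trans (Equiv.sum_comp (Equiv.addLeft 1) φ)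

end ZMod

theorem sum_Icc_prod_eq_prod_sum_range_of_pairwise_coprime {R : Type*} [CommSemiring R]
    {s : Finset ℕ} (hs : (s : Set ℕ).Pairwise Nat.Coprime) (h0 : 0 ∉ s)
    (g : ∀ m : ℕ, ZMod m → R) :
    ∑ n ∈ Icc 1 (∏ m ∈ s, m), ∏ m ∈ s, g m n = ∏ m ∈ s, ∑ a ∈ range m, g m a := by
  have (i : s) : NeZero (i : ℕ) := ⟨fun h => h0 (h ▸ i.2)⟩
  set M := ∏ i : s, (i : ℕ)
  have hM : M = ∏ m ∈ s, m := prod_coe_sort s id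
  have : NeZero M := ⟨prod_ne_zero_iff.2 fun i _ => NeZero.ne _⟩
  have hcop : Pairwise (Nat.Coprime on fun i : s => (i : ℕ)) :=
    fun i j hij => hs i.2 j.2 (Subtype.coe_injective.ne hij)
  calc ∑ n ∈ Icc 1 (∏ m ∈ s, m), ∏ m ∈ s, g m n
      = ∑ n ∈ Icc 1 M, ∏ i : s, g i (n : ZMod M).cast := by
        rw [hM]
        refine sum_congr rfl fun n _ => (prod_coe_sort s fun m => g m n).symm.trans ?_
        exact prod_congr rfl fun i _ =>
          congrArg (g i) (ZMod.cast_natCast (hM ▸ dvd_prod_of_mem _ (mem_univ i)) n).symm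
    _ = ∑ x : ZMod M, ∏ i : s, g i x.cast :=
        ZMod.sum_Icc_natCast fun x : ZMod M => ∏ i : s, g i x.cast
    _ = ∑ y : ∀ i : s, ZMod i, ∏ i : s, g i (y i) :=
        Fintype.sum_equiv (ZMod.prodEquivPi _ hcop).toEquiv _ _ fun x =>
          prod_congr rfl fun i _ => congrArg (g i) (ZMod.prodEquivPi_apply _ hcop x i).symm
    _ = ∏ i : s, ∑ z : ZMod i, g i z := (Fintype.prod_sum _).symm
    _ = ∏ i : s, ∑ a ∈ range i, g i a :=
        prod_congr rfl fun i _ => (ZMod.sum_range_natCast _).symm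
    _ = ∏ m ∈ s, ∑ a ∈ range m, g m a := prod_coe_sort s fun m => ∑ a ∈ range m, g m a

theorem Squarefree.sum_Icc_prod_eq_prod_sum_range {R : Type*} [CommSemiring R] {P : ℕ}
    (hP : Squarefree P) (g : ∀ p : ℕ, ZMod p → R) :
    ∑ n ∈ Icc 1 P, ∏ p ∈ P.primeFactors, g p n = ∏ p ∈ P.primeFactors, ∑ a ∈ range p, g p a := by
  simpa only [Nat.prod_primeFactors_of_squarefree hP] using
    sum_Icc_prod_eq_prod_sum_range_of_pairwise_coprime (s := P.primeFactors)
      (fun p hp q hq hpq => (Nat.coprime_primes (Nat.prime_of_mem_primeFactors hp)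
        (Nat.prime_of_mem_primeFactors hq)).2 hpq)
      (fun h => Nat.not_prime_zero (Nat.prime_of_mem_primeFactors h)) g

theorem Int.gcd_natCast_eq_one_iff_forall_primeFactors {X : ℤ} {P : ℕ} (hP : P ≠ 0) :
    Int.gcd X P = 1 ↔ ∀ p ∈ P.primeFactors, ¬ (p : ℤ) ∣ X := by
  change Nat.Coprime _ _ ↔ _
  rw [Int.natAbs_natCast, ← not_iff_not, Nat.Prime.not_coprime_iff_dvd]
  push Not
  simp only [Nat.mem_primeFactors, Int.natCast_dvd]
  exact ⟨fun ⟨p, hp, hpX, hpP⟩ => ⟨p, ⟨hp, hpP, hP⟩, hpX⟩,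
    fun ⟨p, ⟨hp, hpP, _⟩, hpX⟩ => ⟨p, hp, hpX, hpP⟩⟩

theorem Nat.primeFactors_gcd_eq_filter {N P : ℕ} (hP : P ≠ 0) :
    (N.gcd P).primeFactors = P.primeFactors.filter (· ∣ N) := by
  ext p
  simp only [Nat.mem_primeFactors, mem_filter, Nat.dvd_gcd_iff, ne_eq, Nat.gcd_eq_zero_iff, hP,
    and_false, not_false_eq_true, and_true]
  tauto

theorem Nat.Prime.intCast_dvd_sub_mul_add_iff {p : ℕ} (hp : p.Prime) (N n : ℕ) :
    (p : ℤ) ∣ (N - n) * (N + n) ↔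
      (n : ZMod p) ∈ ({(N : ZMod p), -(N : ZMod p)} : Finset (ZMod p)) := by
  have := Fact.mk hp
  rw [← ZMod.intCast_zmod_eq_zero_iff_dvd]
  push_cast
  rw [_root_.mul_eq_zero, _root_.sub_eq_zero, add_eq_zero_iff_eq_neg', mem_insert, mem_singleton,
    eq_comm (a := (N : ZMod p))]

noncomputable def localFactor (N : ℕ) (f : ℕ → ℝ) (p : ℕ) (z : ZMod p) : ℝ :=
  if z ∉ ({(N : ZMod p), -(N : ZMod p)} : Finset (ZMod p)) then
    if z = 0 then 1 else (f p - 1) / (p - 1)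
  else 0

theorem ite_gcd_eq_one_eq_prod_localFactor {N P n : ℕ} (hP : Squarefree P) (hn : n ≠ 0)
    (f : ℕ → ℝ) :
    (if Int.gcd (((N : ℤ) - (n : ℤ)) * ((N : ℤ) + (n : ℤ))) (P : ℤ) = 1 then
      ∏ p ∈ (P / Nat.gcd P n).primeFactors, (f p - 1) / ((p : ℝ) - 1) else 0)
      = ∏ p ∈ P.primeFactors, localFactor N f p n := by
  simp only [localFactor]
  rw [prod_ite_zero]
  refine if_congr ?_ ?_ rfl
  · rw [Int.gcd_natCast_eq_one_iff_forall_primeFactors hP.ne_zero]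
    exact forall₂_congr fun p hp =>
      not_congr ((Nat.prime_of_mem_primeFactors hp).intCast_dvd_sub_mul_add_iff N n)
  · rw [Nat.primeFactors_div_gcd hP hn, sdiff_eq_filter, prod_filter]
    refine prod_congr rfl fun p hp => ?_
    have hp' := Nat.prime_of_mem_primeFactors hp
    by_cases hpn : p ∣ n <;>
      simp [ZMod.natCast_eq_zero_iff, Nat.mem_primeFactors_of_ne_zero hn, hp', hpn]

theorem Fintype.sum_ite_eq_else_const {α R : Type*} [Fintype α] [DecidableEq α] [Ring R]
    (a : α) (x c : R) : ∑ z, (if z = a then x else c) = x + (Fintype.card α - 1) * c := by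
  rw [Fintype.sum_eq_add_sum_compl a, if_pos rfl,
    Finset.sum_congr rfl fun z hz => if_neg (mem_compl.1 hz ∘ mem_singleton.2)]
  simp [card_compl, Nat.cast_pred (Fintype.card_pos_iff.2 ⟨a⟩)]

theorem sum_range_localFactor_eq_sub {p : ℕ} (hp : p.Prime) (N : ℕ) (f : ℕ → ℝ) :
    ∑ a ∈ range p, localFactor N f p a =
      1 + (p - 1) * ((f p - 1) / (p - 1)) -
        ∑ z ∈ ({(N : ZMod p), -(N : ZMod p)} : Finset (ZMod p)),
          if z = 0 then 1 else (f p - 1) / (p - 1) := by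
  have := Fact.mk hp
  have htotal := Fintype.sum_ite_eq_else_const (0 : ZMod p) 1 ((f p - 1) / (p - 1))
  rw [ZMod.card] at htotal
  set w : ZMod p → ℝ := fun z => if z = 0 then 1 else (f p - 1) / (p - 1)
  rw [ZMod.sum_range_natCast, ← htotal,
    ← sum_compl_add_sum {(N : ZMod p), -(N : ZMod p)} w, add_sub_cancel_right]
  simp only [localFactor]
  rw [← sum_filter, filter_notMem_eq_sdiff, ← compl_eq_univ_sdiff]

theorem sum_range_localFactor {p : ℕ} (hp : p.Prime) (N : ℕ) (f : ℕ → ℝ) :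
    ∑ a ∈ range p, localFactor N f p a =
      (if p ∣ N then f p - 1 else 1) *
        (if ¬ p ∣ 6 * N then f p - 2 * (f p - 1) / ((p : ℝ) - 1) else 1) := by
  rw [sum_range_localFactor_eq_sub hp]
  set c := (f p - 1) / ((p : ℝ) - 1)
  have hpc : ((p : ℝ) - 1) * c = f p - 1 :=
    mul_div_cancel₀ _ (sub_ne_zero.2 (by exact_mod_cast hp.one_lt.ne'))
  by_cases hN : p ∣ N
  · have hN0 : (N : ZMod p) = 0 := (ZMod.natCast_eq_zero_iff N p).2 hN
    simp [hN0, hN, Dvd.dvd.mul_left hN 6, hpc]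
  have hN0 : (N : ZMod p) ≠ 0 := fun h => hN ((ZMod.natCast_eq_zero_iff N p).1 h)
  rcases hp.eq_two_or_odd' with rfl | hodd
  · have h6 : 2 ∣ 6 * N := dvd_mul_of_dvd_left (by norm_num) N
    rw [ZMod.neg_eq_self_mod_two, pair_eq_singleton, sum_singleton, if_neg hN0, if_neg hN,
      if_neg (not_not.2 h6)]
    ring
  · have hNN : (N : ZMod p) ≠ -N := by
      intro h
      rcases (ZMod.neg_eq_self_iff (N : ZMod p)).1 h.symm with h0 | h2
      · exact hN0 h0
      · exact Nat.not_even_iff_odd.2 hodd ⟨_, h2.symm.trans (two_mul _)⟩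
    rw [sum_pair hNN, if_neg hN0, if_neg (neg_ne_zero.2 hN0), if_neg hN, one_mul]
    split_ifs with h6
    · have h3 : p = 3 := by
        have h6' : p ∣ 2 * 3 := (hp.dvd_mul.1 h6).resolve_right hN
        rcases hp.dvd_mul.1 h6' with h | h
        · exact absurd ((Nat.prime_dvd_prime_iff_eq hp Nat.prime_two).1 h ▸ hodd) (by decide)
        · exact (Nat.prime_dvd_prime_iff_eq hp Nat.prime_three).1 h
      subst h3
      push_cast
      ring
    · rw [mul_div_assoc]
      linarith

theorem stmt_7_general (N P : ℕ) (hsq : Squarefree P) (f : ℕ → ℝ) :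
    ∑ n ∈ (Finset.Icc 1 P).filter
        (fun n : ℕ => Int.gcd (((N : ℤ) - (n : ℤ)) * ((N : ℤ) + (n : ℤ))) (P : ℤ) = 1),
      ∏ p ∈ (P / Nat.gcd P n).primeFactors, (f p - 1) / ((p : ℝ) - 1)
    = (∏ p ∈ (Nat.gcd N P).primeFactors, (f p - 1)) *
      ∏ p ∈ P.primeFactors.filter (fun p => ¬ p ∣ 6 * N),
        (f p - 2 * (f p - 1) / ((p : ℝ) - 1)) := by
  rw [sum_filter, sum_congr rfl fun n hn =>
      ite_gcd_eq_one_eq_prod_localFactor hsq (Nat.one_le_iff_ne_zero.1 (mem_Icc.1 hn).1) f,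
    hsq.sum_Icc_prod_eq_prod_sum_range,
    prod_congr rfl fun p hp => sum_range_localFactor (Nat.prime_of_mem_primeFactors hp) N f,
    prod_mul_distrib, Nat.primeFactors_gcd_eq_filter hsq.ne_zero, prod_filter, prod_filter]

theorem stmt_7 (N P : ℕ) (hN : 1 ≤ N) (hP : 1 ≤ P) (hsq : Squarefree P) (f : ℕ → ℝ) :
    ∑ n ∈ (Finset.Icc 1 P).filter
        (fun n : ℕ => Int.gcd (((N : ℤ) - (n : ℤ)) * ((N : ℤ) + (n : ℤ))) (P : ℤ) = 1),
      ∏ p ∈ (P / Nat.gcd P n).primeFactors, (f p - 1) / ((p : ℝ) - 1)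
    = (∏ p ∈ (Nat.gcd N P).primeFactors, (f p - 1)) *
      ∏ p ∈ P.primeFactors.filter (fun p => ¬ p ∣ 6 * N),
        (f p - 2 * (f p - 1) / ((p : ℝ) - 1)) :=
  stmt_7_general N P hsq f
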